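/- arXiv:1103.3171 — 7 statements merged into one kernel-verified Lean document; each statement's English description precedes it below -/
import Mathlib

section
/- Let G be a finite group and x ∈ G an element that is real, i.e. there exists g ∈ G with g⁻¹xg = x⁻¹. Then there exists a 2-element h ∈ G (an element whose order is a power of 2) such that h⁻¹xh = x⁻¹. -/
/-! If `g` inverts `x` by conjugation then `g ^ 2` centralizes `x`, so every odd power of `g`
still inverts `x`. Writing `orderOf g = 2 ^ k * m` with `m` odd, the odd power `g ^ m` has
order `2 ^ k`. -/

open Nat

section Monoid

variable {M : Type*} [Monoid M]

theorem orderOf_pow_ordCompl (g : M) (p : ℕ) :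
    orderOf (g ^ ordCompl[p] (orderOf g)) = ordProj[p] (orderOf g) := by
  by_cases hg : orderOf g = 0
  · simp [hg]
  · exact orderOf_pow_orderOf_div hg (ordProj_dvd _ _)

end Monoid

section Group

variable {G : Type*} [Group G] {g x : G}

theorem commute_sq_of_inv_mul_mul_eq_inv (hg : g⁻¹ * x * g = x⁻¹) : Commute (g ^ 2) x := by
  have hconj : (g ^ 2)⁻¹ * x * g ^ 2 = x :=
    calc (g ^ 2)⁻¹ * x * g ^ 2 = g⁻¹ * (g⁻¹ * x * g) * g := by rw [pow_two]; group
      _ = g⁻¹ * x⁻¹ * g := by rw [hg]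
      _ = (g⁻¹ * x * g)⁻¹ := by group
      _ = x := by rw [hg, inv_inv]
  calc g ^ 2 * x = g ^ 2 * ((g ^ 2)⁻¹ * x * g ^ 2) := by rw [hconj]
    _ = x * g ^ 2 := by group

theorem inv_pow_mul_mul_pow_of_odd (hg : g⁻¹ * x * g = x⁻¹) {n : ℕ} (hn : Odd n) :
    (g ^ n)⁻¹ * x * g ^ n = x⁻¹ := by
  obtain ⟨k, rfl⟩ := hn
  have hk : Commute ((g ^ 2) ^ k) x := (commute_sq_of_inv_mul_mul_eq_inv hg).pow_left k
  calc (g ^ (2 * k + 1))⁻¹ * x * g ^ (2 * k + 1)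
      = g⁻¹ * (((g ^ 2) ^ k)⁻¹ * (x * (g ^ 2) ^ k)) * g := by group
    _ = g⁻¹ * x * g := by rw [← hk.eq]; group
    _ = x⁻¹ := hg

end Group

/-- If an element `x` of a finite group is real (inverted by some `g ∈ G`),
then it is inverted by some 2-element `h ∈ G`. -/
theorem real_inverted_by_two_element {G : Type*} [Group G] [Finite G] (x : G)
    (hx : ∃ g : G, g⁻¹ * x * g = x⁻¹) :
    ∃ h : G, (∃ k : ℕ, orderOf h = 2 ^ k) ∧ h⁻¹ * x * h = x⁻¹ := by
  obtain ⟨g, hg⟩ := hx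
  have hodd : Odd (ordCompl[2] (orderOf g)) :=
    odd_iff.mpr (two_dvd_ne_zero.mp (not_dvd_ordCompl prime_two (orderOf_pos g).ne'))
  exact ⟨g ^ ordCompl[2] (orderOf g), ⟨_, orderOf_pow_ordCompl g 2⟩,
    inv_pow_mul_mul_pow_of_odd hg hodd⟩
end

section
/- Let G be a finite group with a normal Sylow 2-subgroup. If x ∈ G has odd order and is real (conjugate in G to x⁻¹), then x = 1. -/
/-!
If `g⁻¹ x g = x⁻¹`, then `g²` centralizes `x`. Modulo the normal Sylow 2-subgroup `S` every
element has odd order, so the image of `g` is a power of its square and centralizes the image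
of `x`; that image is then an involution of odd order, hence trivial. So `x` lies in the
2-group `S`, and having odd order, `x = 1`.
-/

section

variable {G : Type*} [Group G]

theorem commute_sq_of_conj_eq_inv {h y : G} (hy : h⁻¹ * y * h = y⁻¹) : Commute (h ^ 2) y := by
  have hy₁ : SemiconjBy h y⁻¹ y := by rw [SemiconjBy, ← hy]; group
  have hy₂ : SemiconjBy h y y⁻¹ := by simpa using hy₁.inv_right
  rw [sq]
  exact hy₁.mul_left hy₂

theorem eq_one_of_conj_eq_inv_of_odd_orderOf {h y : G} (hh : Odd (orderOf h))
    (hyodd : Odd (orderOf y)) (hy : h⁻¹ * y * h = y⁻¹) : y = 1 := by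
  obtain ⟨m, hm⟩ := exists_pow_eq_self_of_coprime (Nat.coprime_two_left.mpr hh)
  have hcomm : Commute h y := hm ▸ (commute_sq_of_conj_eq_inv hy).pow_left m
  have hsq : y ^ 2 = 1 := by
    rw [sq, mul_eq_one_iff_eq_inv, ← hy, mul_assoc, ← hcomm.eq, inv_mul_cancel_left]
  obtain ⟨k, hk⟩ := exists_pow_eq_self_of_coprime (Nat.coprime_two_left.mpr hyodd)
  rw [← hk, hsq, one_pow]

theorem Sylow.not_dvd_orderOf_quotient {p : ℕ} [Fact p.Prime] (P : Sylow p G)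
    [(P : Subgroup G).Normal] [P.FiniteIndex] (q : G ⧸ (P : Subgroup G)) : ¬p ∣ orderOf q :=
  fun h => P.not_dvd_index (h.trans (orderOf_dvd_natCard q))

theorem IsPGroup.eq_one_of_not_dvd_orderOf {p : ℕ} [Fact p.Prime] {P : Subgroup G}
    (hP : IsPGroup p P) {x : G} (hx : x ∈ P) (hpx : ¬p ∣ orderOf x) : x = 1 := by
  by_contra hx1
  have hdvd := hP.dvd_orderOf (g := ⟨x, hx⟩) (by simpa using hx1)
  rw [Subgroup.orderOf_mk] at hdvd
  exact hpx hdvd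

end

/-- In a finite group with a normal Sylow 2-subgroup, every real element of odd
order is trivial. -/
theorem real_odd_order_eq_one_of_normal_sylow {G : Type*} [Group G] [Finite G]
    (S : Sylow 2 G) (hS : (S : Subgroup G).Normal) (x : G)
    (hodd : Odd (orderOf x)) (hx : ∃ g : G, g⁻¹ * x * g = x⁻¹) :
    x = 1 := by
  obtain ⟨g, hg⟩ := hx
  have hxS : x ∈ (S : Subgroup G) := by
    rw [← QuotientGroup.eq_one_iff]
    refine eq_one_of_conj_eq_inv_of_odd_orderOf (h := (g : G ⧸ (S : Subgroup G))) ?_ ?_ ?_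
    · exact Nat.odd_iff.mpr (Nat.two_dvd_ne_zero.mp (S.not_dvd_orderOf_quotient _))
    · exact hodd.of_dvd_nat (orderOf_map_dvd (QuotientGroup.mk' _) x)
    · rw [← QuotientGroup.mk_inv, ← QuotientGroup.mk_inv, ← hg]
      rfl
  exact S.isPGroup'.eq_one_of_not_dvd_orderOf hxS hodd.not_two_dvd_nat
end

section
/- Let G be a finite group with a normal Sylow 2-subgroup S. Then every real element of G is a 2-element, and hence lies in S. -/
/-- In a finite group with a normal Sylow 2-subgroup `S`, every real element is a
2-element, and hence lies in `S`. -/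
theorem real_is_two_element_of_normal_sylow {G : Type*} [Group G] [Finite G]
    (S : Sylow 2 G) (hS : (S : Subgroup G).Normal) (x : G)
    (hx : ∃ g : G, g⁻¹ * x * g = x⁻¹) :
    (∃ k : ℕ, orderOf x = 2 ^ k) ∧ x ∈ (S : Subgroup G) := by
  haveI : Fact (Nat.Prime 2) := ⟨Nat.prime_two⟩
  obtain ⟨g, hg⟩ := hx
  haveI := hS
  set π := QuotientGroup.mk' (S : Subgroup G) with hπ
  have hodd : ¬ 2 ∣ Nat.card (G ⧸ (S : Subgroup G)) := by
    rw [← Subgroup.index_eq_card]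
    exact S.not_dvd_index
  set a := π g with ha
  set b := π x with hb
  have hconj : a⁻¹ * b * a = b⁻¹ := by
    rw [ha, hb, ← map_inv, ← map_inv, ← map_mul, ← map_mul, hg]
  have h1 : b * a = a * b⁻¹ := by
    calc b * a = a * (a⁻¹ * b * a) := by group
    _ = a * b⁻¹ := by rw [hconj]
  have h2 : b⁻¹ * a = a * b := by
    calc b⁻¹ * a = a * (a⁻¹ * b * a)⁻¹ := by group
    _ = a * b := by rw [hconj, inv_inv]
  have key : Commute b (a ^ 2) := by
    show b * a ^ 2 = a ^ 2 * b
    calc b * a ^ 2 = (b * a) * a := by rw [pow_two, ← mul_assoc]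
    _ = a * (b⁻¹ * a) := by rw [h1, mul_assoc]
    _ = a ^ 2 * b := by rw [h2, pow_two, mul_assoc]
  -- orderOf a is odd
  have hdvd : orderOf a ∣ Nat.card (G ⧸ (S : Subgroup G)) := orderOf_dvd_natCard a
  have haodd : ¬ 2 ∣ orderOf a := fun h => hodd (h.trans hdvd)
  obtain ⟨m, hm⟩ : Odd (orderOf a) := Nat.odd_iff.mpr (Nat.two_dvd_ne_zero.mp haodd)
  have haa : (a ^ 2) ^ (m + 1) = a := by
    rw [← pow_mul]
    have h2m : 2 * (m + 1) = orderOf a + 1 := by omega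
    rw [h2m, pow_succ, pow_orderOf_eq_one, one_mul]
  have hcab : b * a = a * b := by
    have := key.pow_right (m + 1)
    rwa [haa] at this
  have hbinv : b⁻¹ = b := by
    rw [← hconj, mul_assoc, hcab, ← mul_assoc, inv_mul_cancel, one_mul]
  have hb2 : b ^ 2 = 1 := by
    nth_rewrite 1 [pow_two, ← hbinv]
    exact inv_mul_cancel b
  have hbord : orderOf b ∣ 2 := orderOf_dvd_of_pow_eq_one hb2
  have hb1 : b = 1 := by
    rw [← orderOf_eq_one_iff]
    rcases (Nat.dvd_prime Nat.prime_two).mp hbord with h | h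
    · exact h
    · have hd := orderOf_dvd_natCard b
      rw [h] at hd
      exact absurd hd hodd
  have hxS : x ∈ (S : Subgroup G) := by
    rwa [hb, hπ, QuotientGroup.mk'_apply, QuotientGroup.eq_one_iff] at hb1
  refine ⟨?_, hxS⟩
  obtain ⟨k, hk⟩ := S.isPGroup' ⟨x, hxS⟩
  have hxk : x ^ (2 ^ k) = 1 := by
    have := congrArg (Subtype.val) hk
    simpa using this
  obtain ⟨j, _, hj⟩ := (Nat.dvd_prime_pow Nat.prime_two).mp
    (orderOf_dvd_of_pow_eq_one hxk)
  exact ⟨j, hj⟩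
end

section
/- Let G be a finite group and x ∈ G a real element of odd order. Then x lies in the commutator subgroup G′ of G. Consequently, the subgroup generated by all real elements of odd order (the real core R(G)) is contained in G′. -/
/-! If `g` inverts `x` then `x⁻²` is the commutator `⁅g⁻¹, x⁆`, so `x²` lies in `G′`; when `x` has
odd order, `x` is a power of `x²`. -/

open scoped commutatorElement

theorem Subgroup.mem_of_pow_mem_of_coprime {G : Type*} [Group G] {H : Subgroup G} {x : G}
    {n : ℕ} (hn : n.Coprime (orderOf x)) (hx : x ^ n ∈ H) : x ∈ H := by
  obtain ⟨m, hm⟩ := exists_pow_eq_self_of_coprime hn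
  exact hm ▸ H.pow_mem hx m

section RealElement

variable {G : Type*} [Group G] {g x : G}

theorem commutatorElement_inv_left_of_conj_eq_inv (h : g⁻¹ * x * g = x⁻¹) :
    ⁅g⁻¹, x⁆ = (x ^ 2)⁻¹ := by
  rw [commutatorElement_def, inv_inv, h, sq, mul_inv_rev]

theorem sq_mem_commutator_of_conj_eq_inv (h : g⁻¹ * x * g = x⁻¹) : x ^ 2 ∈ commutator G := by
  rw [← inv_mem_iff, ← commutatorElement_inv_left_of_conj_eq_inv h, commutator_eq_closure]
  exact Subgroup.subset_closure (commutator_mem_commutatorSet _ _)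

theorem mem_commutator_of_odd_orderOf_of_conj_eq_inv (hx : Odd (orderOf x))
    (h : g⁻¹ * x * g = x⁻¹) : x ∈ commutator G :=
  Subgroup.mem_of_pow_mem_of_coprime (Nat.coprime_two_left.mpr hx)
    (sq_mem_commutator_of_conj_eq_inv h)

end RealElement

theorem real_core_le_commutator_general {G : Type*} [Group G] :
    (∀ x : G, Odd (orderOf x) → (∃ g : G, g⁻¹ * x * g = x⁻¹) → x ∈ commutator G) ∧
    Subgroup.closure {x : G | Odd (orderOf x) ∧ ∃ g : G, g⁻¹ * x * g = x⁻¹} ≤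
      commutator G := by
  have real_mem : ∀ x : G, Odd (orderOf x) → (∃ g : G, g⁻¹ * x * g = x⁻¹) →
      x ∈ commutator G :=
    fun _ hx ⟨_, h⟩ => mem_commutator_of_odd_orderOf_of_conj_eq_inv hx h
  exact ⟨real_mem, (Subgroup.closure_le _).mpr fun x ⟨hx, hreal⟩ => real_mem x hx hreal⟩

/-- Every real element of odd order of a finite group lies in the commutator subgroup;
consequently the real core (generated by all real elements of odd order) is contained
in the commutator subgroup. -/
theorem real_core_le_commutator {G : Type*} [Group G] [Finite G] :
    (∀ x : G, Odd (orderOf x) → (∃ g : G, g⁻¹ * x * g = x⁻¹) → x ∈ commutator G) ∧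
    Subgroup.closure {x : G | Odd (orderOf x) ∧ ∃ g : G, g⁻¹ * x * g = x⁻¹} ≤
      commutator G :=
  real_core_le_commutator_general
end

section
/- Let P be a finite p-group and χ an irreducible complex character of P with χ(1) ≤ pⁿ. Then the (n+1)-st term P⁽ⁿ⁺¹⁾ of the derived series of P is contained in the kernel of χ. -/
/-!
Induction on `n`. If every element of `P` acts by a scalar, `P⁽¹⁾` already acts trivially.
Otherwise, since `P` is nilpotent, some `b` acting by a non-scalar is central modulo the scalars,
so `ρ (g⁻¹ b g) = χ g • ρ b` for a character `χ : P →* ℂˣ`, and `ρ g` carries the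
`μ`-eigenspace `W` of `ρ b` to the `χ g * μ`-eigenspace. Hence `K = ker χ` stabilises `W`, and acts
irreducibly on it: the `P`-translates of a `K`-stable `W₀ ≤ W` span `V`, and those by `g ∉ K` lie
in other eigenspaces. The `[P : K] ≥ p` translates of `W` are independent, so
`dim W ≤ dim V / p ≤ pⁿ⁻¹`. By induction `K⁽ⁿ⁾` fixes `W` pointwise; as `P⁽¹⁾ ≤ K`, the normal
subgroup `P⁽ⁿ⁺¹⁾ ≤ K⁽ⁿ⁾` fixes `W`, hence all of the irreducible `V`.
-/

open Module Module.End
open scoped commutatorElement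

theorem derivedSeries_succ_le_map_subtype {G : Type*} [Group G] {K : Subgroup G}
    (hK : commutator G ≤ K) (n : ℕ) :
    derivedSeries G (n + 1) ≤ (derivedSeries K n).map K.subtype := by
  induction n with
  | zero => rwa [derivedSeries_zero, ← MonoidHom.range_eq_map, Subgroup.range_subtype]
  | succ n ih =>
    rw [derivedSeries_succ G (n + 1), derivedSeries_succ K n, Subgroup.map_commutator]
    exact Subgroup.commutator_mono ih ih

theorem Group.IsNilpotent.exists_notMem_forall_commutatorElement_mem {G : Type*} [Group G]
    [Group.IsNilpotent G] {S : Subgroup G} [S.Normal] (hS : S ≠ ⊤) :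
    ∃ b ∉ S, ∀ g : G, ⁅g, b⁆ ∈ S := by
  have : Nontrivial (G ⧸ S) := QuotientGroup.nontrivial_iff.mpr hS
  obtain ⟨⟨z, hz⟩, hz1⟩ :=
    Subgroup.ne_bot_iff_exists_ne_one.mp (Group.IsNilpotent.center_ne_bot (G ⧸ S))
  obtain ⟨b, rfl⟩ := QuotientGroup.mk_surjective z
  refine ⟨b, fun hb => hz1 (Subtype.ext ((QuotientGroup.eq_one_iff b).mpr hb)), fun g => ?_⟩
  rw [← QuotientGroup.eq_one_iff, ← QuotientGroup.mk'_apply, map_commutatorElement,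
    commutatorElement_eq_one_iff_mul_comm]
  exact Subgroup.mem_center_iff.mp hz _

theorem IsPGroup.le_index_of_ne_top {p : ℕ} [Fact p.Prime] {G : Type*} [Group G] [Finite G]
    (hG : IsPGroup p G) {H : Subgroup G} (hH : H ≠ ⊤) : p ≤ H.index := by
  obtain ⟨n, hn⟩ := hG.index H
  rw [hn]
  refine Nat.le_self_pow (fun h => hH ?_) p
  rwa [h, pow_zero, Subgroup.index_eq_one] at hn

theorem iSupIndep.sum_finrank_le {k V ι : Type*} [Field k] [AddCommGroup V] [Module k V]
    [FiniteDimensional k V] [Fintype ι] {f : ι → Submodule k V} (hf : iSupIndep f) :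
    ∑ i, finrank k (f i) ≤ finrank k V := by
  classical
  rw [← finrank_directSum]
  exact LinearMap.finrank_le_finrank_of_injective (f := DFinsupp.lsum k fun i => (f i).subtype)
    hf.dfinsupp_lsum_injective

namespace Representation

section Monoid

variable {k G V : Type*} [Field k] [Monoid G] [AddCommGroup V] [Module k V]
  {ρ : Representation k G V}

theorem isIrreducible_of_forall_eq_top [Nontrivial V]
    (h : ∀ W : Submodule k V, (∀ g, W ≤ W.comap (ρ g)) → W ≠ ⊥ → W = ⊤) : ρ.IsIrreducible where
  exists_pair_ne := ⟨⊥, ⊤, fun h => bot_ne_top (congrArg Subrepresentation.toSubmodule h)⟩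
  eq_bot_or_eq_top σ := by
    refine (em (σ.toSubmodule = ⊥)).imp (fun h0 => ?_) (fun h0 => ?_) <;>
      apply Subrepresentation.toSubmodule_injective
    · exact h0
    · exact h _ (fun g v hv => σ.apply_mem_toSubmodule g hv) h0

namespace IsIrreducible

variable [ρ.IsIrreducible]

variable (ρ) in
include ρ in
theorem nontrivial : Nontrivial V := by
  by_contra hV
  rw [not_nontrivial_iff_subsingleton] at hV
  exact bot_ne_top (α := Subrepresentation ρ)
    (Subrepresentation.toSubmodule_injective (Subsingleton.elim _ _))

theorem eq_top_of_le_comap {W : Submodule k V} (hW : ∀ g, W ≤ W.comap (ρ g)) (hW0 : W ≠ ⊥) :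
    W = ⊤ :=
  congrArg Subrepresentation.toSubmodule <|
    (eq_bot_or_eq_top (⟨W, fun g _ hv => hW g hv⟩ : Subrepresentation ρ)).resolve_left
      fun h => hW0 (congrArg Subrepresentation.toSubmodule h)

theorem iSup_map_eq_top {W : Submodule k V} (hW0 : W ≠ ⊥) : ⨆ g, W.map (ρ g) = ⊤ := by
  refine eq_top_of_le_comap (ρ := ρ) (fun g => ?_) ?_
  · rw [← Submodule.map_le_iff_le_comap, Submodule.map_iSup]
    refine iSup_le fun h => ?_
    rw [← Submodule.map_comp, ← Module.End.mul_eq_comp, ← map_mul]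
    exact le_iSup (fun h => W.map (ρ h)) (g * h)
  · refine ne_bot_of_le_ne_bot hW0 ?_
    simpa [Module.End.one_eq_id, Submodule.map_id] using le_iSup (fun h => W.map (ρ h)) 1

end IsIrreducible

end Monoid

variable {k G V : Type*} [Field k] [Group G] [AddCommGroup V] [Module k V]
  {ρ : Representation k G V}

theorem isUnit_apply (g : G) : IsUnit (ρ g) :=
  asGroupHom_apply ρ g ▸ (ρ.asGroupHom g).isUnit

theorem IsIrreducible.le_ker_of_normal [ρ.IsIrreducible] {N : Subgroup G} [N.Normal]
    {W : Submodule k V} (hW0 : W ≠ ⊥) (hN : ∀ n ∈ N, ∀ w ∈ W, ρ n w = w) : N ≤ ρ.ker := by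
  have htop := IsIrreducible.eq_top_of_le_comap (le_comap_invariants ρ N)
    (ne_bot_of_le_ne_bot hW0 fun w hw n => hN n n.2 w hw)
  intro n hn
  ext v
  exact (htop ▸ Submodule.mem_top : v ∈ invariants (ρ.comp N.subtype)) ⟨n, hn⟩

theorem IsIrreducible.le_ker_of_le_map_ker [ρ.IsIrreducible] {K : Subgroup G}
    {W : Submodule k V} (hW : ∀ g : K, W ≤ W.comap (ρ.comp K.subtype g)) (hW0 : W ≠ ⊥)
    {N : Subgroup G} [N.Normal]
    (hN : N ≤ (subrepresentation (ρ.comp K.subtype) W hW).ker.map K.subtype) : N ≤ ρ.ker := by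
  refine IsIrreducible.le_ker_of_normal hW0 fun n hn w hw => ?_
  obtain ⟨g, hg, rfl⟩ := hN hn
  exact congrArg Subtype.val (LinearMap.congr_fun (MonoidHom.mem_ker.mp hg) ⟨w, hw⟩)

variable (ρ) in
def scalarSubgroup : Subgroup G :=
  (Units.map (algebraMap k (Module.End k V)).toMonoidHom).range.comap ρ.asGroupHom

theorem mem_scalarSubgroup {g : G} :
    g ∈ ρ.scalarSubgroup ↔ ∃ c : kˣ, algebraMap k _ c = ρ g := by
  simp only [scalarSubgroup, Subgroup.mem_comap, MonoidHom.mem_range, Units.ext_iff,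
    Units.coe_map, asGroupHom_apply]
  rfl

instance : ρ.scalarSubgroup.Normal where
  conj_mem g hg h := by
    obtain ⟨c, hc⟩ := mem_scalarSubgroup.mp hg
    refine mem_scalarSubgroup.mpr ⟨c, ?_⟩
    rw [map_mul, map_mul, ← hc, ← Algebra.commutes, mul_assoc, ← map_mul, mul_inv_cancel,
      map_one, mul_one]

theorem commutator_le_ker_of_scalarSubgroup_eq_top (hS : ρ.scalarSubgroup = ⊤) :
    commutator G ≤ ρ.ker := by
  rw [commutator_def, Subgroup.commutator_le]
  intro x _ y _
  obtain ⟨c, hc⟩ := mem_scalarSubgroup.mp (hS ▸ Subgroup.mem_top x)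
  rw [MonoidHom.mem_ker, commutatorElement_def, map_mul, map_mul, map_mul, ← hc,
    Algebra.commutes, hc, mul_assoc (ρ y), ← map_mul, mul_inv_cancel, map_one, mul_one,
    ← map_mul, mul_inv_cancel, map_one]

theorem exists_monoidHom_conj_eq_smul [Nontrivial V] {b : G}
    (hb : ∀ g : G, ⁅g, b⁆ ∈ ρ.scalarSubgroup) :
    ∃ χ : G →* kˣ, ∀ g, ρ (g⁻¹ * b * g) = (χ g : k) • ρ b := by
  have hconj (g : G) : ∃ c : kˣ, ρ (g⁻¹ * b * g) = (c : k) • ρ b := by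
    obtain ⟨c, hc⟩ := mem_scalarSubgroup.mp (hb g⁻¹)
    refine ⟨c, ?_⟩
    rw [Algebra.smul_def, hc, ← map_mul, commutatorElement_def, inv_inv, inv_mul_cancel_right]
  choose c hc using hconj
  have hinj (c d : kˣ) (h : (c : k) • ρ b = (d : k) • ρ b) : c = d :=
    Units.ext (smul_left_injective k (isUnit_apply b).ne_zero h)
  refine ⟨{ toFun := c, map_one' := hinj _ _ ?_, map_mul' := fun g h => hinj _ _ ?_ }, hc⟩
  · simp [← hc]
  · calc ((c (g * h) : kˣ) : k) • ρ b = ρ h⁻¹ * ρ (g⁻¹ * b * g) * ρ h := by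
          rw [← hc, ← map_mul, ← map_mul]; group
      _ = (c g : k) • ρ (h⁻¹ * b * h) := by
          rw [hc, mul_smul_comm, smul_mul_assoc, ← map_mul, ← map_mul]
      _ = ((c g * c h : kˣ) : k) • ρ b := by rw [hc, smul_smul, Units.val_mul]

section Twist

variable {b : G} {χ : G →* kˣ} (hχ : ∀ g, ρ (g⁻¹ * b * g) = (χ g : k) • ρ b)
include hχ

theorem map_eigenspace_le (g : G) (μ : k) :
    (eigenspace (ρ b) μ).map (ρ g) ≤ eigenspace (ρ b) (χ g * μ) := by
  rintro _ ⟨v, hv, rfl⟩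
  rw [SetLike.mem_coe, mem_eigenspace_iff] at hv
  rw [mem_eigenspace_iff]
  calc ρ b (ρ g v) = ρ g (ρ (g⁻¹ * b * g) v) := by
        rw [← Module.End.mul_apply, ← Module.End.mul_apply, ← map_mul, ← map_mul]; group
    _ = (χ g * μ) • ρ g v := by rw [hχ, LinearMap.smul_apply, hv, smul_smul, map_smul]

theorem eigenspace_le_comap_of_mem_ker {g : G} (hg : g ∈ χ.ker) (μ : k) :
    eigenspace (ρ b) μ ≤ (eigenspace (ρ b) μ).comap (ρ g) := by
  rw [← Submodule.map_le_iff_le_comap]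
  simpa [MonoidHom.mem_ker.mp hg] using map_eigenspace_le hχ g μ

theorem IsIrreducible.eigenspace_le_of_le_comap [ρ.IsIrreducible] {μ : k} (hμ : μ ≠ 0)
    {W : Submodule k V} (hW : W ≤ eigenspace (ρ b) μ) (hWinv : ∀ g ∈ χ.ker, W ≤ W.comap (ρ g))
    (hW0 : W ≠ ⊥) : eigenspace (ρ b) μ ≤ W := by
  set Y := ⨆ (ν) (_ : ν ≠ μ), eigenspace (ρ b) ν
  have hmap (g : G) : W.map (ρ g) ≤ W ⊔ Y := by
    by_cases hg : g ∈ χ.ker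
    · exact le_sup_of_le_left (Submodule.map_le_iff_le_comap.mpr (hWinv g hg))
    · refine le_sup_of_le_right ((Submodule.map_mono hW).trans
        ((map_eigenspace_le hχ g μ).trans (le_iSup₂_of_le (χ g * μ) ?_ le_rfl)))
      rwa [Ne, mul_eq_right₀ hμ, Units.val_eq_one]
  have hdisj : eigenspace (ρ b) μ ⊓ Y = ⊥ := ((eigenspaces_iSupIndep (ρ b)) μ).eq_bot
  calc eigenspace (ρ b) μ = eigenspace (ρ b) μ ⊓ ⨆ g, W.map (ρ g) := by
        rw [IsIrreducible.iSup_map_eq_top hW0, inf_top_eq]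
    _ ≤ eigenspace (ρ b) μ ⊓ (W ⊔ Y) := inf_le_inf_left _ (iSup_le hmap)
    _ = W := by rw [inf_comm, sup_inf_assoc_of_le Y hW, inf_comm, hdisj, sup_bot_eq]

theorem IsIrreducible.isIrreducible_subrepresentation_eigenspace [ρ.IsIrreducible] {μ : k}
    (hμ : μ ≠ 0) (hE : eigenspace (ρ b) μ ≠ ⊥) :
    (subrepresentation (ρ.comp χ.ker.subtype) (eigenspace (ρ b) μ)
      fun g => eigenspace_le_comap_of_mem_ker hχ g.2 μ).IsIrreducible := by
  have := Submodule.nontrivial_iff_ne_bot.mpr hE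
  refine isIrreducible_of_forall_eq_top fun W₀ hW₀ hW₀0 => ?_
  have hle := IsIrreducible.eigenspace_le_of_le_comap hχ hμ (W := W₀.map (Submodule.subtype _))
    (Submodule.map_subtype_le _ _) ?_ ?_
  · rw [eq_top_iff]
    rintro ⟨v, hv⟩ -
    obtain ⟨w, hw, rfl⟩ := hle hv
    exact hw
  · rintro g hg _ ⟨w, hw, rfl⟩
    exact ⟨_, hW₀ ⟨g, hg⟩ hw, rfl⟩
  · rwa [Ne, ← Submodule.map_bot (eigenspace (ρ b) μ).subtype,
      (Submodule.map_injective_of_injective (eigenspace (ρ b) μ).injective_subtype).eq_iff]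

theorem index_ker_mul_finrank_eigenspace_le [Finite G] [FiniteDimensional k V] {μ : k}
    (hμ : μ ≠ 0) : χ.ker.index * finrank k (eigenspace (ρ b) μ) ≤ finrank k V := by
  have : Finite χ.range := Finite.of_surjective _ χ.rangeRestrict_surjective
  have : Fintype χ.range := Fintype.ofFinite _
  have hinj : Function.Injective fun u : χ.range => ((u : kˣ) : k) * μ := fun u v h =>
    Subtype.ext (Units.ext (mul_right_cancel₀ hμ h))
  calc χ.ker.index * finrank k (eigenspace (ρ b) μ)
      = ∑ _u : χ.range, finrank k (eigenspace (ρ b) μ) := by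
        rw [Subgroup.index_ker, Nat.card_eq_fintype_card, Finset.sum_const, smul_eq_mul,
          Finset.card_univ]
    _ ≤ ∑ u : χ.range, finrank k (eigenspace (ρ b) ((u : kˣ) * μ)) := by
        refine Finset.sum_le_sum fun ⟨_, g, rfl⟩ _ => ?_
        refine LinearMap.finrank_le_finrank_of_injective (f := (ρ g).restrict fun v hv =>
          map_eigenspace_le hχ g μ (Submodule.mem_map_of_mem hv)) ?_
        exact fun v w h => Subtype.ext
          (((Module.End.isUnit_iff _).mp (isUnit_apply g)).injective (congrArg Subtype.val h))
    _ ≤ finrank k V := ((eigenspaces_iSupIndep (ρ b)).comp hinj).sum_finrank_le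

theorem ker_ne_top_of_notMem_scalarSubgroup [ρ.IsIrreducible] (hb : b ∉ ρ.scalarSubgroup)
    {μ : k} (hμ : HasEigenvalue (ρ b) μ) (hμ0 : μ ≠ 0) : χ.ker ≠ ⊤ := by
  intro hK
  have hE := IsIrreducible.eq_top_of_le_comap
    (fun g => eigenspace_le_comap_of_mem_ker hχ (hK ▸ Subgroup.mem_top g) μ) hμ
  refine hb (mem_scalarSubgroup.mpr ⟨Units.mk0 μ hμ0, LinearMap.ext fun v => ?_⟩)
  have hv : v ∈ eigenspace (ρ b) μ := hE ▸ Submodule.mem_top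
  rw [mem_eigenspace_iff] at hv
  simp [hv]

end Twist

section PGroup

variable [IsAlgClosed k] [Finite G] [FiniteDimensional k V] {p : ℕ} [Fact p.Prime]

theorem IsIrreducible.exists_isIrreducible_subrepresentation [ρ.IsIrreducible]
    (hG : IsPGroup p G) (hS : ρ.scalarSubgroup ≠ ⊤) :
    ∃ (K : Subgroup G) (W : Submodule k V) (hW : ∀ g : K, W ≤ W.comap (ρ.comp K.subtype g)),
      commutator G ≤ K ∧ W ≠ ⊥ ∧ p * finrank k W ≤ finrank k V ∧
        (subrepresentation (ρ.comp K.subtype) W hW).IsIrreducible := by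
  have := hG.isNilpotent
  have := IsIrreducible.nontrivial ρ
  obtain ⟨b, hbS, hb⟩ := Group.IsNilpotent.exists_notMem_forall_commutatorElement_mem hS
  obtain ⟨χ, hχ⟩ := exists_monoidHom_conj_eq_smul hb
  obtain ⟨μ, hμ⟩ := exists_eigenvalue (ρ b)
  have hμ0 : μ ≠ 0 := fun h =>
    (spectrum.zero_mem_iff k).mp (h ▸ hμ.mem_spectrum) (isUnit_apply b)
  refine ⟨χ.ker, eigenspace (ρ b) μ, fun g => eigenspace_le_comap_of_mem_ker hχ g.2 μ,
    Abelianization.commutator_subset_ker χ, hμ, ?_,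
    IsIrreducible.isIrreducible_subrepresentation_eigenspace hχ hμ0 hμ⟩
  calc p * finrank k (eigenspace (ρ b) μ)
      ≤ χ.ker.index * finrank k (eigenspace (ρ b) μ) :=
        Nat.mul_le_mul_right _ (hG.le_index_of_ne_top
          (ker_ne_top_of_notMem_scalarSubgroup hχ hbS hμ hμ0))
    _ ≤ finrank k V := index_ker_mul_finrank_eigenspace_le hχ hμ0

theorem IsIrreducible.scalarSubgroup_eq_top_of_finrank_lt [ρ.IsIrreducible] (hG : IsPGroup p G)
    (h : finrank k V < p) : ρ.scalarSubgroup = ⊤ := by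
  by_contra hS
  obtain ⟨-, W, -, -, hW0, hdim, -⟩ := IsIrreducible.exists_isIrreducible_subrepresentation hG hS
  have := Nat.mul_le_mul_left p (Submodule.one_le_finrank_iff.mpr hW0)
  omega

theorem IsIrreducible.derivedSeries_le_ker [ρ.IsIrreducible] (hG : IsPGroup p G) (n : ℕ)
    (hn : finrank k V ≤ p ^ n) : derivedSeries G (n + 1) ≤ ρ.ker := by
  induction n generalizing G V with
  | zero =>
    rw [zero_add, derivedSeries_one]
    refine commutator_le_ker_of_scalarSubgroup_eq_top
      (IsIrreducible.scalarSubgroup_eq_top_of_finrank_lt hG ?_)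
    exact hn.trans_lt (pow_zero p ▸ (Fact.out : p.Prime).one_lt)
  | succ n ih =>
    by_cases hS : ρ.scalarSubgroup = ⊤
    · exact (derivedSeries_antitone G (Nat.le_add_left 1 _)).trans
        (derivedSeries_one G ▸ commutator_le_ker_of_scalarSubgroup_eq_top hS)
    obtain ⟨K, W, hW, hK, hW0, hdim, hirr⟩ :=
      IsIrreducible.exists_isIrreducible_subrepresentation hG hS
    have hWn : finrank k W ≤ p ^ n :=
      Nat.le_of_mul_le_mul_left (pow_succ' p n ▸ hdim.trans hn) (Fact.out : p.Prime).pos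
    exact IsIrreducible.le_ker_of_le_map_ker hW hW0 <|
      (derivedSeries_succ_le_map_subtype hK (n + 1)).trans
        (Subgroup.map_mono (ih (ρ := subrepresentation _ W hW) (hG.to_subgroup K) hWn))

end PGroup

end Representation

open CategoryTheory

theorem FDRep.isIrreducible_ρ {k G : Type*} [Field k] [Monoid G] (V : FDRep k G) [Simple V] :
    Representation.IsIrreducible V.ρ := by
  have : Nontrivial V := by
    by_contra h
    rw [not_nontrivial_iff_subsingleton] at h
    refine id_nonzero V (Action.hom_ext _ _ ?_)
    ext v
    exact Subsingleton.elim _ _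
  refine Representation.isIrreducible_of_forall_eq_top fun W hW hW0 => ?_
  let ι : FDRep.of (Representation.subrepresentation V.ρ W hW) ⟶ V :=
    ⟨FGModuleCat.ofHom W.subtype, fun g => rfl⟩
  have : Mono ι := ConcreteCategory.mono_of_injective _ Subtype.val_injective
  have hι : ι ≠ 0 := by
    obtain ⟨w, hw, hw0⟩ := Submodule.exists_mem_ne_zero_of_ne_bot hW0
    exact fun h => hw0 congr(($h).hom ⟨w, hw⟩)
  have : IsIso ι := isIso_of_mono_of_nonzero hι
  rw [← Submodule.range_subtype W, LinearMap.range_eq_top]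
  exact (FDRep.isoToLinearEquiv (asIso ι)).surjective

/-- If `P` is a finite `p`-group and `χ` is an irreducible complex character of `P`
with `χ(1) ≤ p ^ n`, then the `(n+1)`-st derived subgroup of `P` is contained in the
kernel of `χ`. -/
theorem derived_le_ker_of_small_degree {p : ℕ} [Fact p.Prime] {P : Type} [Group P]
    [Fintype P] (hP : IsPGroup p P) (V : FDRep ℂ P) [Simple V] (n : ℕ)
    (hdeg : Module.finrank ℂ V ≤ p ^ n) :
    ∀ g ∈ derivedSeries P (n + 1), V.character g = V.character 1 := by
  have := FDRep.isIrreducible_ρ V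
  intro g hg
  have hg1 : V.ρ g = 1 := Representation.IsIrreducible.derivedSeries_le_ker hP n hdeg hg
  rw [FDRep.character, FDRep.character, hg1, map_one V.ρ]
end

section
/- Let G be a finite group with a normal Sylow 2-subgroup S, and let χ be an irreducible complex character of G of odd degree. Then the commutator subgroup S′ of S is contained in the kernel of χ. -/
/-!
An odd-dimensional representation of a finite 2-group `P` (over a field of characteristic
`≠ 2`) has a common eigenvector. Induct on `|P| + dim V`: if `dim V = 1` every nonzero vector
works; otherwise pick `T ≤ P` of index 2 and a common eigenvector `v` of `T`. For `a ∉ T` the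
span of `v` and `ρ a⁻¹ v` is `P`-stable of dimension `≤ 2 < dim V`, so by Maschke it or its
complement is a smaller odd-dimensional subrepresentation.

Let `v` be a common eigenvector of `S`. Its eigenvalues are multiplicative
scalars, so commutators of `S` fix `v`. As `S′` is normal in `G`, the vectors fixed by `S′` form
a nonzero subrepresentation of the simple `V`, i.e. all of `V`, so `S′` acts trivially.
-/

open CategoryTheory Module
open scoped commutatorElement

namespace Subrepresentation

variable {k G V : Type*} [Field k] [Monoid G] [AddCommGroup V] [Module k V]
  {ρ : Representation k G V}

lemma isCompl_toSubmodule {σ τ : Subrepresentation ρ} (h : IsCompl σ τ) :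
    IsCompl σ.toSubmodule τ.toSubmodule := by
  rw [isCompl_iff, disjoint_iff, codisjoint_iff] at h ⊢
  exact ⟨congrArg toSubmodule h.1, congrArg toSubmodule h.2⟩

lemma finrank_pos [FiniteDimensional k V] {σ : Subrepresentation ρ} (hσ : σ ≠ ⊥) :
    0 < finrank k σ.toSubmodule :=
  Nat.pos_of_ne_zero fun h => hσ (toSubmodule_injective (Submodule.finrank_eq_zero.mp h))

lemma exists_odd_finrank_lt [FiniteDimensional k V] [Representation.IsSemisimpleRepresentation ρ]
    (hV : Odd (finrank k V)) {σ : Subrepresentation ρ} (hbot : σ ≠ ⊥) (htop : σ ≠ ⊤) :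
    ∃ τ : Subrepresentation ρ,
      Odd (finrank k τ.toSubmodule) ∧ finrank k τ.toSubmodule < finrank k V := by
  obtain ⟨τ, hστ⟩ := exists_isCompl σ
  have hsum := Submodule.finrank_add_eq_of_isCompl (isCompl_toSubmodule hστ)
  have hσ := finrank_pos hbot
  have hτ := finrank_pos fun h => htop (eq_top_of_isCompl_bot (h ▸ hστ))
  rcases Nat.even_or_odd (finrank k σ.toSubmodule) with hσ_even | hσ_odd
  · exact ⟨τ, (Nat.odd_add'.mp (hsum ▸ hV)).mpr hσ_even, by omega⟩
  · exact ⟨σ, hσ_odd, by omega⟩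

end Subrepresentation

namespace Representation

section Monoid

variable {k G V : Type*} [Field k] [Monoid G] [AddCommGroup V] [Module k V]

def IsCommonEigenvector (ρ : Representation k G V) (v : V) : Prop :=
  v ≠ 0 ∧ ∀ g, ∃ c : k, ρ g v = c • v

variable {ρ : Representation k G V}

lemma isCommonEigenvector_of_finrank_eq_one (h : finrank k V = 1) {v : V} (hv : v ≠ 0) :
    ρ.IsCommonEigenvector v := by
  refine ⟨hv, fun g => ?_⟩
  obtain ⟨c, hc⟩ := (finrank_eq_one_iff_of_nonzero' v hv).mp h (ρ g v)
  exact ⟨c, hc.symm⟩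

lemma IsCommonEigenvector.of_subrepresentation {σ : Subrepresentation ρ} {v : σ.toSubmodule}
    (hv : σ.toRepresentation.IsCommonEigenvector v) : ρ.IsCommonEigenvector v := by
  refine ⟨by simpa using hv.1, fun g => ?_⟩
  obtain ⟨c, hc⟩ := hv.2 g
  exact ⟨c, congrArg Subtype.val hc⟩

end Monoid

section Group

variable {k G V : Type*} [Field k] [Group G] [AddCommGroup V] [Module k V]

-- `g ∈ ρ.stabilizer v ↔ ρ g v = v` holds by `Iff.rfl`.
def stabilizer (ρ : Representation k G V) (v : V) : Subgroup G :=
  (MulAction.stabilizer (V →ₗ[k] V)ˣ v).comap ρ.asGroupHom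

variable {ρ : Representation k G V}

lemma IsCommonEigenvector.apply_commutatorElement {v : V} (hv : ρ.IsCommonEigenvector v)
    (g h : G) : ρ ⁅g, h⁆ v = v := by
  have eigenvalue_inv : ∀ x : G, ∃ c c' : k, ρ x v = c • v ∧ ρ x⁻¹ v = c' • v ∧ c' * c = 1 := by
    intro x
    obtain ⟨c, hc⟩ := hv.2 x
    obtain ⟨c', hc'⟩ := hv.2 x⁻¹
    refine ⟨c, c', hc, hc', smul_left_injective k hv.1 ?_⟩
    calc (c' * c) • v = ρ x⁻¹ (ρ x v) := by rw [hc, map_smul, hc', smul_smul, mul_comm]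
      _ = (1 : k) • v := by
        rw [← Module.End.mul_apply, ← map_mul, inv_mul_cancel, map_one, Module.End.one_apply,
          one_smul]
  obtain ⟨a, a', ha, ha', haa⟩ := eigenvalue_inv g
  obtain ⟨b, b', hb, hb', hbb⟩ := eigenvalue_inv h
  calc ρ ⁅g, h⁆ v = ((a' * a) * (b' * b)) • v := by
        simp only [commutatorElement_def, map_mul, Module.End.mul_apply, ha, hb, ha', hb',
          map_smul, smul_smul]
        congr 1
        ring
    _ = v := by rw [haa, hbb, one_mul, one_smul]

lemma IsCommonEigenvector.commutator_le_stabilizer {H : Subgroup G} {v : V}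
    (hv : IsCommonEigenvector (ρ.comp H.subtype) v) : ⁅H, H⁆ ≤ ρ.stabilizer v :=
  Subgroup.commutator_le.mpr fun g hg h hh => hv.apply_commutatorElement ⟨g, hg⟩ ⟨h, hh⟩

lemma exists_subrepresentation_finrank_le_two {T : Subgroup G} (hT : T.index = 2) {v : V}
    (hv : IsCommonEigenvector (ρ.comp T.subtype) v) :
    ∃ σ : Subrepresentation ρ, σ ≠ ⊥ ∧ finrank k σ.toSubmodule ≤ 2 := by
  classical
  obtain ⟨a, -, ha⟩ := Subgroup.index_eq_two_iff_exists_notMem_and'.mp hT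
  set W := Submodule.span k (({v, ρ a⁻¹ v} : Finset V) : Set V)
  have hv_mem : v ∈ W := Submodule.subset_span (by simp)
  have hav_mem : ρ a⁻¹ v ∈ W := Submodule.subset_span (by simp)
  have apply_mem : ∀ q : G, ρ q v ∈ W := by
    intro q
    rcases ha q with haq | hq
    · obtain ⟨c, hc⟩ := hv.2 ⟨a * q, haq⟩
      have : ρ q v = c • ρ a⁻¹ v := by
        rw [← inv_mul_cancel_left a q, map_mul, Module.End.mul_apply,
          show ρ (a * q) v = c • v from hc, map_smul]
      exact this ▸ W.smul_mem c hav_mem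
    · obtain ⟨c, hc⟩ := hv.2 ⟨q, hq⟩
      exact (show ρ q v = c • v from hc) ▸ W.smul_mem c hv_mem
  refine ⟨⟨W, fun p => ?_⟩, fun h => hv.1 ?_,
    (finrank_span_finset_le_card _).trans Finset.card_le_two⟩
  · show W ≤ W.comap (ρ p)
    rw [Submodule.span_le, Finset.coe_insert, Finset.coe_singleton, Set.insert_subset_iff,
      Set.singleton_subset_iff]
    refine ⟨apply_mem p, ?_⟩
    rw [SetLike.mem_coe, Submodule.mem_comap, ← Module.End.mul_apply, ← map_mul]
    exact apply_mem _
  · have hW : W = ⊥ := congrArg Subrepresentation.toSubmodule h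
    exact (Submodule.mem_bot k).mp (hW ▸ hv_mem)

end Group

end Representation

open Representation

lemma IsPGroup.exists_index_eq {p : ℕ} [hp : Fact p.Prime] {G : Type*} [Group G] [Finite G]
    [Nontrivial G] (hG : IsPGroup p G) : ∃ T : Subgroup G, T.index = p := by
  obtain ⟨_ | m, hm⟩ := IsPGroup.iff_card.mp hG
  · exact absurd hm Finite.one_lt_card.ne'
  obtain ⟨T, hT⟩ := Sylow.exists_subgroup_card_pow_prime p (hm ▸ pow_dvd_pow p m.le_succ)
  refine ⟨T, Nat.eq_of_mul_eq_mul_left (pow_pos hp.out.pos m) ?_⟩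
  rw [← hT, T.card_mul_index, hm, pow_succ, hT]

theorem IsPGroup.exists_isCommonEigenvector_of_odd_finrank {k G V : Type*} [Field k]
    [NeZero (2 : k)] [Group G] [Finite G] (hG : IsPGroup 2 G) [AddCommGroup V] [Module k V]
    [FiniteDimensional k V] (ρ : Representation k G V) (hV : Odd (finrank k V)) :
    ∃ v, ρ.IsCommonEigenvector v := by
  induction hn : Nat.card G + finrank k V using Nat.strong_induction_on generalizing G V with
  | _ n ih =>
    have : Nontrivial V := Module.nontrivial_of_finrank_pos hV.pos
    obtain ⟨v, hv⟩ := exists_ne (0 : V)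
    by_cases hV1 : finrank k V = 1
    · exact ⟨v, isCommonEigenvector_of_finrank_eq_one hV1 hv⟩
    rcases subsingleton_or_nontrivial G with _ | _
    · exact ⟨v, hv, fun g => ⟨1, by rw [Subsingleton.elim g 1, map_one, one_smul]; rfl⟩⟩
    obtain ⟨T, hT⟩ := hG.exists_index_eq
    have hTG : Nat.card T < Nat.card G := by
      have hcard := T.card_mul_index
      rw [hT] at hcard
      have := Nat.card_pos (α := G)
      omega
    obtain ⟨u, hu⟩ := ih _ (by omega) (hG.to_subgroup T) (ρ.comp T.subtype) hV rfl
    obtain ⟨σ, hσ, hσ2⟩ := exists_subrepresentation_finrank_le_two hT hu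
    have hσV : σ ≠ ⊤ := by
      rintro rfl
      rw [show (⊤ : Subrepresentation ρ).toSubmodule = ⊤ from rfl, finrank_top] at hσ2
      obtain ⟨m, hm⟩ := hV
      omega
    have : NeZero (Nat.card G : k) := by
      obtain ⟨m, hm⟩ := IsPGroup.iff_card.mp hG
      exact ⟨by rw [hm, Nat.cast_pow, Nat.cast_ofNat]; exact pow_ne_zero _ two_ne_zero⟩
    obtain ⟨τ, hτ, hτV⟩ := Subrepresentation.exists_odd_finrank_lt hV hσ hσV
    obtain ⟨w, hw⟩ := ih _ (by omega) hG τ.toRepresentation hτ rfl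
    exact ⟨w, hw.of_subrepresentation⟩

lemma FDRep.subrepresentation_eq_top_of_mem {k G : Type*} [Field k] [Monoid G] (V : FDRep k G)
    [Simple V] {σ : Subrepresentation V.ρ} {v : V} (hv : v ≠ 0) (hvσ : v ∈ σ.toSubmodule) :
    σ = ⊤ := by
  let f : FDRep.of σ.toRepresentation ⟶ V :=
    { hom := FGModuleCat.ofHom σ.toSubmodule.subtype, comm := fun g => by ext x; rfl }
  have : Mono f := ConcreteCategory.mono_of_injective f Subtype.val_injective
  have : IsIso f := isIso_of_mono_of_nonzero fun h => hv (congrArg (· ⟨v, hvσ⟩) h)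
  refine Subrepresentation.toSubmodule_injective (eq_top_iff.mpr fun w _ => ?_)
  obtain ⟨u, rfl⟩ := (ConcreteCategory.bijective_of_isIso f).2 w
  exact u.2

lemma FDRep.le_ker_of_le_stabilizer {k G : Type*} [Field k] [Group G] (V : FDRep k G) [Simple V]
    {N : Subgroup G} [N.Normal] {v : V} (hv : v ≠ 0) (hN : N ≤ stabilizer V.ρ v) :
    N ≤ V.ρ.ker := by
  let σ : Subrepresentation V.ρ :=
    ⟨invariants (V.ρ.comp N.subtype), fun g _ hx => le_comap_invariants V.ρ N g hx⟩
  have hσ : σ = ⊤ := V.subrepresentation_eq_top_of_mem hv fun n => hN n.2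
  intro n hn
  ext x
  have hx : x ∈ σ.toSubmodule := hσ ▸ Submodule.mem_top
  exact hx ⟨n, hn⟩

/-- If `G` is a finite group with normal Sylow 2-subgroup `S` and `χ` is an irreducible
complex character of `G` of odd degree, then `[S, S]` is contained in the kernel of `χ`. -/
theorem sylow_commutator_le_ker_of_odd_degree {G : Type} [Group G] [Fintype G]
    (S : Sylow 2 G) (hS : (S : Subgroup G).Normal)
    (V : FDRep ℂ G) [Simple V] (hdeg : Odd (Module.finrank ℂ V)) :
    ∀ g ∈ ⁅(S : Subgroup G), (S : Subgroup G)⁆, V.character g = V.character 1 := by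
  obtain ⟨v, hv⟩ := S.isPGroup'.exists_isCommonEigenvector_of_odd_finrank
    (V.ρ.comp (S : Subgroup G).subtype) hdeg
  have hker := V.le_ker_of_le_stabilizer hv.1 hv.commutator_le_stabilizer
  intro g hg
  rw [FDRep.character, FDRep.character, MonoidHom.mem_ker.mp (hker hg), V.ρ.map_one]
end

section
/- Let G be a finite group with normal Sylow 2-subgroup S, and let x S′ be a real element of G/S′ (conjugate in G/S′ to its inverse), where S′ = [S,S]. If every real element of G of odd order is trivial, then every real element of G/S′ lies in S/S′ and is inverted by an element of the 2-group S/S′. -/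
/-- Let `G` be a finite group with normal Sylow 2-subgroup `S` and `S' = [S, S]`.
If every real element of `G` of odd order is trivial, then every real element of
`G/S'` lies in `S/S'` and is inverted by an element of (the image of) `S/S'`. -/
theorem real_in_quotient_by_sylow_commutator {G : Type*} [Group G] [Finite G]
    (S : Sylow 2 G) (hS : (S : Subgroup G).Normal)
    [hN : (⁅(S : Subgroup G), (S : Subgroup G)⁆).Normal]
    (hodd : ∀ x : G, Odd (orderOf x) → (∃ g : G, g⁻¹ * x * g = x⁻¹) → x = 1) :
    ∀ y : G ⧸ ⁅(S : Subgroup G), (S : Subgroup G)⁆,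
      (∃ g : G ⧸ ⁅(S : Subgroup G), (S : Subgroup G)⁆, g⁻¹ * y * g = y⁻¹) →
        y ∈ Subgroup.map (QuotientGroup.mk' ⁅(S : Subgroup G), (S : Subgroup G)⁆)
            (S : Subgroup G) ∧
          ∃ s ∈ Subgroup.map (QuotientGroup.mk' ⁅(S : Subgroup G), (S : Subgroup G)⁆)
              (S : Subgroup G), s⁻¹ * y * s = y⁻¹ := by
  set N := ⁅(S : Subgroup G), (S : Subgroup G)⁆ with hNdef
  intro y hy
  obtain ⟨g, hg⟩ := hy
  set π := QuotientGroup.mk' N with hπdef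
  have hπ : Function.Surjective π := QuotientGroup.mk'_surjective N
  have hNS : N ≤ (S : Subgroup G) := Subgroup.commutator_le_left _ _
  set Sb := Subgroup.map π (S : Subgroup G) with hSbdef
  haveI hSbN : Sb.Normal := Subgroup.Normal.map hS π hπ
  have hker : π.ker = N := QuotientGroup.ker_mk' N
  have hcomap : Subgroup.comap π Sb = (S : Subgroup G) := by
    rw [hSbdef, Subgroup.comap_map_eq, hker]
    exact sup_eq_left.mpr hNS
  have hindex : Sb.index = (S : Subgroup G).index := by
    rw [← Subgroup.index_comap_of_surjective Sb hπ, hcomap]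
  have hoddSidx : Odd (S : Subgroup G).index :=
    Nat.odd_iff.mpr (Nat.two_dvd_ne_zero.mp S.not_dvd_index)
  -- the composite map `G → (G/N)/S̄` with kernel `S`
  set ρ := QuotientGroup.mk' Sb with hρdef
  set φ := ρ.comp π with hφdef
  have hφker : φ.ker = (S : Subgroup G) := by
    rw [hφdef, ← MonoidHom.comap_ker, QuotientGroup.ker_mk', hcomap]
  -- Schur–Zassenhaus complement
  obtain ⟨H, hH⟩ := Subgroup.exists_right_complement'_of_coprime
    (N := (S : Subgroup G)) S.card_coprime_index
  have hinj : ∀ a ∈ H, ∀ b ∈ H, φ a = φ b → a = b := by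
    intro a ha b hb hab
    have hmem : a⁻¹ * b ∈ (S : Subgroup G) := by
      rw [← hφker, MonoidHom.mem_ker, map_mul, map_inv, hab, inv_mul_cancel]
    have hb' : a⁻¹ * b ∈ (⊥ : Subgroup G) :=
      hH.disjoint.le_bot (Subgroup.mem_inf.mpr ⟨hmem, mul_mem (inv_mem ha) hb⟩)
    exact inv_mul_eq_one.mp (Subgroup.mem_bot.mp hb')
  have hdecomp : ∀ g0 : G, ∃ h ∈ H, φ h = φ g0 := by
    intro g0
    obtain ⟨⟨⟨s, hs⟩, ⟨h, hh⟩⟩, hsh, -⟩ := hH.existsUnique g0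
    refine ⟨h, hh, ?_⟩
    have hφs : φ s = 1 := by rw [← MonoidHom.mem_ker, hφker]; exact hs
    simp only at hsh
    rw [← hsh, map_mul, hφs, one_mul]
  -- images of y and g under ρ
  have hreal : (ρ g)⁻¹ * ρ y * ρ g = (ρ y)⁻¹ := by
    rw [← map_inv, ← map_mul, ← map_mul, hg, map_inv]
  -- part 1 : `ρ y = 1`, i.e. `y ∈ Sb`
  obtain ⟨y0, hy0⟩ := hπ y
  obtain ⟨x, hxH, hx⟩ := hdecomp y0
  obtain ⟨g0, hg0⟩ := hπ g
  obtain ⟨c, hcH, hc⟩ := hdecomp g0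
  have hφy0 : φ y0 = ρ y := by rw [hφdef, MonoidHom.comp_apply, hy0]
  have hφg0 : φ g0 = ρ g := by rw [hφdef, MonoidHom.comp_apply, hg0]
  have hxreal : c⁻¹ * x * c = x⁻¹ := by
    refine hinj _ (mul_mem (mul_mem (inv_mem hcH) hxH) hcH) _ (inv_mem hxH) ?_
    rw [map_mul, map_mul, map_inv, map_inv, hx, hc, hφy0, hφg0, hreal]
  have hxord : Odd (orderOf x) := by
    have h1 : orderOf x ∣ (S : Subgroup G).index :=
      hH.symm.index_eq_card ▸ Subgroup.orderOf_dvd_natCard H hxH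
    rw [Nat.odd_iff, ← Nat.two_dvd_ne_zero] at hoddSidx ⊢
    exact fun hd => hoddSidx (hd.trans h1)
  have hx1 : x = 1 := hodd x hxord ⟨c, hxreal⟩
  have hρy : ρ y = 1 := by rw [← hφy0, ← hx, hx1, map_one]
  have hymem : y ∈ Sb := by
    rwa [← QuotientGroup.ker_mk' Sb, MonoidHom.mem_ker]
  -- part 2 : `g ^ n` with `n = orderOf (ρ g)` lies in `Sb` and inverts `y`
  set n := orderOf (ρ g) with hn
  have hnodd : Odd n := by
    have h1 : n ∣ Sb.index := by
      rw [Subgroup.index_eq_card]; exact orderOf_dvd_natCard _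
    rw [hindex] at h1
    rw [Nat.odd_iff, ← Nat.two_dvd_ne_zero] at hoddSidx ⊢
    exact fun hd => hoddSidx (hd.trans h1)
  have hgn : g ^ n ∈ Sb := by
    have h2 : ρ (g ^ n) = 1 := by rw [map_pow, hn, pow_orderOf_eq_one]
    rwa [← QuotientGroup.ker_mk' Sb, MonoidHom.mem_ker]
  have hcomm : g⁻¹ * y⁻¹ * g = y := by
    have h2 := congrArg Inv.inv hg
    rw [inv_inv] at h2
    conv_rhs => rw [← h2]
    group
  have key : ∀ m : ℕ, (g ^ (2 * m + 1))⁻¹ * y * g ^ (2 * m + 1) = y⁻¹ := by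
    intro m
    induction m with
    | zero => simpa using hg
    | succ m ih =>
      have e : g ^ (2 * (m + 1) + 1) = g ^ (2 * m + 1) * (g * g) := by
        rw [show 2 * (m + 1) + 1 = (2 * m + 1) + 1 + 1 by ring, pow_succ, pow_succ, mul_assoc]
      have e2 : (g ^ (2 * m + 1) * (g * g))⁻¹ * y * (g ^ (2 * m + 1) * (g * g)) =
          g⁻¹ * (g⁻¹ * ((g ^ (2 * m + 1))⁻¹ * y * g ^ (2 * m + 1)) * g) * g := by
        group
      rw [e, e2, ih, hcomm, hg]
  obtain ⟨m, hm⟩ := hnodd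
  exact ⟨hymem, g ^ n, hgn, by rw [hm]; exact key m⟩
end
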